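/- In the random weighted network model, for every integer m ≥ 2 the m-th moment of the centered normalized entry C_{ij} := W_{ij}/(μ·√(ω_i ω_j)) − ρ·√(ω_i ω_j) satisfies E[C_{ij}^m] = ρ·∑_{l=0}^{m−2} binom(m,l)·(−ρ)^l·(ν_{m−l}/μ^{m−l})·(ω_i ω_j)^{l+1−m/2} + (1−m)·(−ρ)^m·(ω_i ω_j)^{m/2}, where the exponents of ω_i ω_j are real powers and ν_k := E[W_{ij}^k | L_{ij} = 1]. -/

import Mathlib

/-!
Expand `(W / (μ √u) - ρ √u) ^ m`, `u = ω i * ω j`, binomially in the powers of `W`. Since `W`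
vanishes off `{L = 1}`, `E[W ^ k] = ν k · ρ u` for every `k ≥ 1`; the terms with `W ^ k`, `k ≥ 2`,
give the sum, and the two remaining terms `k = 1` and `k = 0` combine to
`(1 - m) (-ρ) ^ m u ^ (m / 2)`.
-/

open MeasureTheory Finset

theorem integral_add_mul_pow {Ω : Type*} [MeasurableSpace Ω] {P : Measure Ω} {X : Ω → ℝ}
    (hX : ∀ k, Integrable (fun x => X x ^ k) P) (a b : ℝ) (m : ℕ) :
    ∫ x, (b + a * X x) ^ m ∂P
      = ∑ l ∈ range (m + 1), b ^ l * a ^ (m - l) * m.choose l * ∫ x, X x ^ (m - l) ∂P := by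
  have hexp : ∀ x, (b + a * X x) ^ m
      = ∑ l ∈ range (m + 1), b ^ l * a ^ (m - l) * m.choose l * X x ^ (m - l) := fun x => by
    rw [add_pow]
    exact sum_congr rfl fun l _ => by ring
  simp_rw [hexp]
  rw [integral_finsetSum _ fun l _ => (hX (m - l)).const_mul _]
  exact sum_congr rfl fun l _ => integral_const_mul _ _

theorem sq_rpow_add_one_sub_half {s : ℝ} (hs : 0 < s) {l m : ℕ} (hlm : l ≤ m) :
    (s ^ 2) ^ ((l : ℝ) + 1 - m / 2) = s ^ (l + 2) / s ^ (m - l) := by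
  rw [eq_div_iff (by positivity), ← Real.rpow_natCast_mul hs.le, ← Real.rpow_natCast s (m - l),
    ← Real.rpow_add hs, ← Real.rpow_natCast]
  congr 1
  push_cast [hlm]
  ring

theorem sq_rpow_half {s : ℝ} (hs : 0 ≤ s) (m : ℕ) : (s ^ 2) ^ ((m : ℝ) / 2) = s ^ m := by
  rw [← Real.rpow_natCast_mul hs, ← Real.rpow_natCast]
  congr 1
  push_cast
  ring

theorem sum_centered_binomial_moments {s ρ : ℝ} (hs : 0 < s) {ν : ℕ → ℝ} (hν₁ : ν 1 ≠ 0)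
    {M : ℕ → ℝ} (hM0 : M 0 = 1) (hM : ∀ k, k ≠ 0 → M k = ν k * (ρ * s ^ 2))
    {m : ℕ} (hm : 2 ≤ m) :
    ∑ l ∈ range (m + 1), (-(ρ * s)) ^ l * (ν 1 * s)⁻¹ ^ (m - l) * m.choose l * M (m - l)
      = ρ * ∑ l ∈ range (m - 1),
            (m.choose l : ℝ) * (-ρ) ^ l * (ν (m - l) / ν 1 ^ (m - l)) *
              (s ^ 2) ^ ((l : ℝ) + 1 - (m : ℝ) / 2)
        + (1 - (m : ℝ)) * (-ρ) ^ m * (s ^ 2) ^ ((m : ℝ) / 2) := by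
  obtain ⟨m, rfl⟩ := Nat.exists_eq_add_of_le' hm
  rw [sum_range_succ, sum_range_succ, show m + 2 - 1 = m + 1 by omega, mul_sum, add_assoc]
  congr 1
  · refine sum_congr rfl fun l hl => ?_
    rw [mem_range] at hl
    rw [hM _ (by omega), sq_rpow_add_one_sub_half hs (by omega), inv_pow, mul_pow]
    field_simp
    ring
  · rw [show m + 2 - (m + 1) = 1 by omega, Nat.sub_self, hM0, hM 1 one_ne_zero,
      sq_rpow_half hs.le, Nat.choose_succ_self_right, Nat.choose_self]
    field_simp
    push_cast
    ring

theorem centered_entry_moment_general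
    {Ω : Type*} [MeasurableSpace Ω] (P : Measure Ω) [IsProbabilityMeasure P]
    (n : ℕ) (ω : Fin n → ℝ) (hω : ∀ i, 0 < ω i)
    (ρ : ℝ) (hρ : ρ = 1 / ∑ k, ω k)
    (L : Fin n → Fin n → Ω → ℕ)
    (hL01 : ∀ i j x, L i j x = 0 ∨ L i j x = 1)
    (hPL : ∀ i j, P {x | L i j x = 1} = ENNReal.ofReal (ρ * ω i * ω j))
    (W : Fin n → Fin n → Ω → ℝ)
    (hWmeas : ∀ i j, Measurable (W i j))
    (hW0 : ∀ i j x, 0 ≤ W i j x) (hW1 : ∀ i j x, W i j x ≤ 1)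
    (hWzero : ∀ i j, ∀ᵐ x ∂P, L i j x = 0 → W i j x = 0)
    -- conditional moments ν k = E[W^k | L = 1]
    (ν : ℕ → ℝ) (hμ : 0 < ν 1)
    (hν : ∀ i j k, ∫ x in {x | L i j x = 1}, (W i j x) ^ k ∂P
      = ν k * (P {x | L i j x = 1}).toReal)
    (i j : Fin n) (m : ℕ) (hm : 2 ≤ m) :
    ∫ x, (W i j x / (ν 1 * Real.sqrt (ω i * ω j))
          - ρ * Real.sqrt (ω i * ω j)) ^ m ∂P
      = ρ * ∑ l ∈ Finset.range (m - 1),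
            (Nat.choose m l : ℝ) * (-ρ) ^ l * (ν (m - l) / (ν 1) ^ (m - l)) *
              (ω i * ω j) ^ ((l : ℝ) + 1 - (m : ℝ) / 2)
        + (1 - (m : ℝ)) * (-ρ) ^ m * (ω i * ω j) ^ ((m : ℝ) / 2) := by
  set u := ω i * ω j
  have hu : 0 < u := mul_pos (hω i) (hω j)
  have hρ0 : 0 < ρ := by
    rw [hρ]
    exact one_div_pos.2 (sum_pos (fun k _ => hω k) ⟨i, mem_univ i⟩)
  have hint : ∀ k, Integrable (fun x => W i j x ^ k) P := fun k =>
    .of_mem_Icc 0 1 ((hWmeas i j).pow_const k).aemeasurable <| .of_forall fun x =>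
      ⟨pow_nonneg (hW0 i j x) k, pow_le_one₀ (hW0 i j x) (hW1 i j x)⟩
  have hmom : ∀ k, k ≠ 0 → ∫ x, W i j x ^ k ∂P = ν k * (ρ * √u ^ 2) := fun k hk => by
    have hoff : ∀ᵐ x ∂P, x ∉ {x | L i j x = 1} → W i j x ^ k = 0 := by
      filter_upwards [hWzero i j] with x hx hx1
      rw [hx ((hL01 i j x).resolve_right hx1), zero_pow hk]
    rw [← setIntegral_eq_integral_of_ae_compl_eq_zero hoff, hν, hPL, mul_assoc ρ,
      ENNReal.toReal_ofReal (mul_pos hρ0 hu).le, Real.sq_sqrt hu.le]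
  have hexpand := integral_add_mul_pow hint (ν 1 * √u)⁻¹ (-(ρ * √u)) m
  have hsum := sum_centered_binomial_moments (Real.sqrt_pos.2 hu) hμ.ne'
    (M := fun k => ∫ x, W i j x ^ k ∂P) (by simp) hmom hm
  rw [Real.sq_sqrt hu.le] at hsum
  have hcentered : ∀ x, W i j x / (ν 1 * √u) - ρ * √u = -(ρ * √u) + (ν 1 * √u)⁻¹ * W i j x :=
    fun x => by ring
  simp_rw [hcentered]
  rw [hexpand, hsum]

/-- In the random weighted network model, for `m ≥ 2`, the `m`-th moment of the
centered normalized entry `C i j = W i j / (ν 1 ·√(ω i · ω j)) − ρ·√(ω i · ω j)`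
is given by the binomial-expansion formula, with real powers of `ω i * ω j`. -/
theorem centered_entry_moment
    {Ω : Type*} [MeasurableSpace Ω] (P : Measure Ω) [IsProbabilityMeasure P]
    (n : ℕ) (ω : Fin n → ℝ) (hω : ∀ i, 0 < ω i)
    (ρ : ℝ) (hρ : ρ = 1 / ∑ k, ω k)
    (hp : ∀ i j, ρ * ω i * ω j ≤ 1)
    (L : Fin n → Fin n → Ω → ℕ)
    (hL01 : ∀ i j x, L i j x = 0 ∨ L i j x = 1)
    (hLmeas : ∀ i j, Measurable (L i j))
    (hPL : ∀ i j, P {x | L i j x = 1} = ENNReal.ofReal (ρ * ω i * ω j))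
    (W : Fin n → Fin n → Ω → ℝ)
    (hWmeas : ∀ i j, Measurable (W i j))
    (hW0 : ∀ i j x, 0 ≤ W i j x) (hW1 : ∀ i j x, W i j x ≤ 1)
    (hWzero : ∀ i j, ∀ᵐ x ∂P, L i j x = 0 → W i j x = 0)
    -- conditional moments ν k = E[W^k | L = 1]
    (ν : ℕ → ℝ) (hμ : 0 < ν 1)
    (hν : ∀ i j k, ∫ x in {x | L i j x = 1}, (W i j x) ^ k ∂P
      = ν k * (P {x | L i j x = 1}).toReal)
    (i j : Fin n) (m : ℕ) (hm : 2 ≤ m) :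
    ∫ x, (W i j x / (ν 1 * Real.sqrt (ω i * ω j))
          - ρ * Real.sqrt (ω i * ω j)) ^ m ∂P
      = ρ * ∑ l ∈ Finset.range (m - 1),
            (Nat.choose m l : ℝ) * (-ρ) ^ l * (ν (m - l) / (ν 1) ^ (m - l)) *
              (ω i * ω j) ^ ((l : ℝ) + 1 - (m : ℝ) / 2)
        + (1 - (m : ℝ)) * (-ρ) ^ m * (ω i * ω j) ^ ((m : ℝ) / 2) :=
  centered_entry_moment_general P n ω hω ρ hρ L hL01 hPL W hWmeas hW0 hW1 hWzero ν hμ hν i j m hm
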